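/- Let C = x·I + y·P₂ + (1−x−y)·P₃ be a rational orthogonal circulant matrix (x, y ∈ ℚ, x² + y² − x − y + xy = 0). If all eigenvalues of C are roots of unity, then x ∈ {1, −1/3, 2/3, 0}; consequently C is a permutation matrix or one of the Grover-type matrices (2/3)J − P for a permutation matrix P. -/

import Mathlib

open Matrix

noncomputable def P2 : Matrix (Fin 3) (Fin 3) ℚ := !![0,1,0; 0,0,1; 1,0,0]
noncomputable def P3 : Matrix (Fin 3) (Fin 3) ℚ := !![0,0,1; 1,0,0; 0,1,0]

/-!
For a root `ω` of `X² + X + 1`, `(1, ω, ω²)` is an eigenvector of `C` with eigenvalue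
`x + yω + zω²` (`z = 1 - x - y`); using `ω²` instead of `ω` gives a second eigenvalue, and the two
add up to `3x - 1`. Both are roots of unity, so `3x - 1` is a rational algebraic integer, i.e. an
integer `k`. Orthogonality reads `k² + 3(x + 2y - 1)² = 4`, so `|k| ≤ 2`, and `k ≠ 0` because
`4/3` is not the square of a rational.
-/

theorem Matrix.mem_spectrum_of_mulVec_eq_smul {n K : Type*} [Fintype n] [DecidableEq n] [Field K]
    {M : Matrix n n K} {v : n → K} {μ : K} (hv : v ≠ 0) (hMv : M *ᵥ v = μ • v) :
    μ ∈ spectrum K M := by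
  rw [spectrum.mem_iff, Matrix.isUnit_iff_isUnit_det, isUnit_iff_ne_zero, not_not,
    ← Matrix.exists_mulVec_eq_zero_iff]
  refine ⟨v, hv, ?_⟩
  rw [Matrix.sub_mulVec, hMv, Algebra.algebraMap_eq_smul_one, Matrix.smul_mulVec, one_mulVec,
    sub_self]

theorem mem_spectrum_map_circulant (x y z : ℚ) {ω : ℂ} (hω : ω ^ 2 + ω + 1 = 0) :
    x + y * ω + z * ω ^ 2 ∈
      spectrum ℂ ((x • (1 : Matrix (Fin 3) (Fin 3) ℚ) + y • P2 + z • P3).map (algebraMap ℚ ℂ)) := by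
  have hω3 : ω ^ 3 = 1 := by linear_combination (ω - 1) * hω
  refine Matrix.mem_spectrum_of_mulVec_eq_smul (v := ![1, ω, ω ^ 2])
    (fun h => one_ne_zero (congrFun h 0)) ?_
  ext i
  fin_cases i <;> simp [P2, P3, mulVec, dotProduct, Fin.sum_univ_three] <;> grind

theorem Rat.three_mul_sq_ne_four (q : ℚ) : 3 * q ^ 2 ≠ 4 := by
  intro hq
  have h3 : IsSquare (3 : ℚ) := ⟨3 * q / 2, by linear_combination (-(3:ℚ) / 4) * hq⟩
  rw [Rat.isSquare_iff] at h3
  norm_num at h3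

theorem Int.eq_of_sq_add_three_mul_sq_eq_four {k : ℤ} {q : ℚ} (h : (k : ℚ) ^ 2 + 3 * q ^ 2 = 4) :
    k = -2 ∨ k = -1 ∨ k = 1 ∨ k = 2 := by
  have hk0 : k ≠ 0 := by
    rintro rfl
    exact Rat.three_mul_sq_ne_four q (by simpa using h)
  have hk4 : k ^ 2 ≤ 4 := by exact_mod_cast (by nlinarith : (k : ℚ) ^ 2 ≤ 4)
  have hk_bounds : -2 ≤ k ∧ k ≤ 2 := by constructor <;> nlinarith
  omega

theorem stmt_18 (x y : ℚ) (h : x ^ 2 + y ^ 2 - x - y + x * y = 0)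
    (C : Matrix (Fin 3) (Fin 3) ℚ)
    (hC : C = x • (1 : Matrix (Fin 3) (Fin 3) ℚ) + y • P2 + (1 - x - y) • P3)
    (hroots : ∀ μ ∈ spectrum ℂ (C.map (algebraMap ℚ ℂ)), ∃ n : ℕ, 0 < n ∧ μ ^ n = 1) :
    x = 1 ∨ x = -1/3 ∨ x = 2/3 ∨ x = 0 := by
  set z := 1 - x - y
  have hint {ω : ℂ} (hω : ω ^ 2 + ω + 1 = 0) : IsIntegral ℤ (x + y * ω + z * ω ^ 2) := by
    obtain ⟨n, hn, hpow⟩ := hroots _ (hC ▸ mem_spectrum_map_circulant x y z hω)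
    exact IsIntegral.of_pow hn (hpow ▸ isIntegral_one)
  obtain ⟨ω, hω⟩ : ∃ ω : ℂ, ω ^ 2 + ω + 1 = 0 := by
    have := (Complex.isPrimitiveRoot_exp 3 (by norm_num)).geom_sum_eq_zero (by norm_num)
    simp only [Finset.sum_range_succ, Finset.sum_range_zero] at this
    exact ⟨_, by linear_combination this⟩
  have hω' : (ω ^ 2) ^ 2 + ω ^ 2 + 1 = 0 := by linear_combination (ω ^ 2 - ω + 1) * hω
  have htrace :
      (x + y * ω + z * ω ^ 2) + (x + y * ω ^ 2 + z * (ω ^ 2) ^ 2) = ((3 * x - 1 : ℚ) : ℂ) := by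
    simp only [z]
    push_cast
    linear_combination (y + (1 - x - y) * (ω ^ 2 - ω + 1)) * hω
  obtain ⟨k, hk⟩ := IsIntegrallyClosed.isIntegral_iff.mp
    (IsIntegral.ratCast_iff.mp (htrace ▸ (hint hω).add (hint hω')))
  replace hk : (k : ℚ) = 3 * x - 1 := hk
  have hnorm : (k : ℚ) ^ 2 + 3 * (x + 2 * y - 1) ^ 2 = 4 := by
    rw [hk]
    linear_combination 12 * h
  have hx : x = (k + 1) / 3 := by linarith
  rcases Int.eq_of_sq_add_three_mul_sq_eq_four hnorm with rfl | rfl | rfl | rfl <;> norm_num [hx]
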